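/- (Imaginary time evolution in Pauli quantum computing.) Let P_{1,i}, P_{2,i}, P_i be unitary n-qubit matrices with P_i Hermitian, let λ_i ≥ 0, and let B be the linear map on ℂ^{2^n}⊗ℂ^{2^n} defined by B(|i⟩⊗|j⟩) = (H^{⊗n}|i⟩)⊗|i⊕j⟩. Suppose B (P_{1,i} ⊗ conj(P_{2,i})) B^{-1} = −I ⊗ P_i for every i. Then for the Lindbladian L[ρ] = Σ_i λ_i (F_i ρ F_i† − (1/2){ρ, F_i†F_i}) with F_i = diag(P_{1,i}, P_{2,i}) and any (1+n)-qubit matrix ρ with upper-right block S: B vec((⟨0|⊗I) L[ρ] (|1⟩⊗I)) = −(I ⊗ H_p + (Σ_i λ_i) I) · B vec(S), where H_p = Σ_i λ_i P_i. -/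

import Mathlib

open Matrix Kronecker BigOperators

/-- Bitstrings of length `n`. -/
abbrev BV (n : ℕ) : Type := Fin n → ZMod 2

/-- The `n`-fold Hadamard matrix `H^{⊗n}`, with entries `2^{-n/2} (-1)^{i·j}`. -/
noncomputable def Hn (n : ℕ) : Matrix (BV n) (BV n) ℂ :=
  Matrix.of fun i j => (Real.sqrt 2 : ℂ)⁻¹ ^ n * (-1 : ℂ) ^ (∑ k, i k * j k : ZMod 2).val

/-- Vectorization of an `n`-qubit matrix: `vec(O) = ∑_{i,j} O_{ij} |i⟩⊗|j⟩`. -/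
def vec {n : ℕ} (O : Matrix (BV n) (BV n) ℂ) : BV n × BV n → ℂ :=
  fun p => O p.1 p.2

/-- The linear map `B` with `B(|i⟩⊗|j⟩) = (H^{⊗n}|i⟩) ⊗ |i⊕j⟩`, as a matrix. -/
noncomputable def Bmat (n : ℕ) : Matrix (BV n × BV n) (BV n × BV n) ℂ :=
  Matrix.of fun p q => Hn n p.1 q.1 * (if p.2 = q.1 + q.2 then 1 else 0)

/-- The Lindbladian (with zero internal Hamiltonian)
`L[ρ] = ∑ i λᵢ (Fᵢ ρ Fᵢ† − (1/2){ρ, Fᵢ†Fᵢ})` with jump operators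
`Fᵢ = diag(P_{1,i}, P_{2,i})`. -/
noncomputable def lindblad {n : ℕ} {ι : Type} [Fintype ι]
    (P1 P2 : ι → Matrix (BV n) (BV n) ℂ) (lam : ι → ℝ)
    (ρ : Matrix (BV n ⊕ BV n) (BV n ⊕ BV n) ℂ) :
    Matrix (BV n ⊕ BV n) (BV n ⊕ BV n) ℂ :=
  ∑ i,
    (lam i : ℂ) •
      (Matrix.fromBlocks (P1 i) 0 0 (P2 i) * ρ *
          (Matrix.fromBlocks (P1 i) 0 0 (P2 i))ᴴ -
        (1 / 2 : ℂ) •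
          (ρ * ((Matrix.fromBlocks (P1 i) 0 0 (P2 i))ᴴ *
              Matrix.fromBlocks (P1 i) 0 0 (P2 i)) +
            ((Matrix.fromBlocks (P1 i) 0 0 (P2 i))ᴴ *
              Matrix.fromBlocks (P1 i) 0 0 (P2 i)) * ρ))

/-! Since `P_{1,i}` and `P_{2,i}` are unitary, so is `F_i = diag(P_{1,i}, P_{2,i})`; hence
`F_i†F_i = 1` and `L[ρ] = ∑ λ_i (F_i ρ F_i† - ρ)`, whose upper-right block is
`∑ λ_i (P_{1,i} S P_{2,i}† - S)`. Vectorization turns `P_{1,i} S P_{2,i}†` into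
`(P_{1,i} ⊗ conj P_{2,i}) vec S`, and the hypothesis, read as the intertwining relation
`B (P_{1,i} ⊗ conj P_{2,i}) = -(I ⊗ P_i) B`, moves `B` past each term. That reading is
legitimate because `-(I ⊗ P_i)` is unitary, hence nonzero, so `B⁻¹` cannot be the junk value `0`. -/

section Blocks

variable {R m n : Type*}

theorem Matrix.toBlocks₁₂_sum [AddCommMonoid R] {ι : Type*} (s : Finset ι)
    (M : ι → Matrix (m ⊕ n) (m ⊕ n) R) :
    (∑ i ∈ s, M i).toBlocks₁₂ = ∑ i ∈ s, (M i).toBlocks₁₂ := by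
  ext a b
  simp only [toBlocks₁₂, of_apply, sum_apply]

theorem Matrix.toBlocks₁₂_smul {S : Type*} [SMul S R] (c : S) (M : Matrix (m ⊕ n) (m ⊕ n) R) :
    (c • M).toBlocks₁₂ = c • M.toBlocks₁₂ := rfl

theorem Matrix.toBlocks₁₂_sub [Sub R] (M N : Matrix (m ⊕ n) (m ⊕ n) R) :
    (M - N).toBlocks₁₂ = M.toBlocks₁₂ - N.toBlocks₁₂ := rfl

theorem Matrix.toBlocks₁₂_fromBlocks_mul_mul_conjTranspose [Fintype m] [Fintype n] [Semiring R]
    [StarRing R] (A : Matrix m m R) (D : Matrix n n R) (M : Matrix (m ⊕ n) (m ⊕ n) R) :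
    (fromBlocks A 0 0 D * M * (fromBlocks A 0 0 D)ᴴ).toBlocks₁₂ = A * M.toBlocks₁₂ * Dᴴ := by
  conv_lhs => rw [← fromBlocks_toBlocks M]
  simp [fromBlocks_conjTranspose, fromBlocks_multiply]

theorem Matrix.fromBlocks_mem_unitary [Fintype m] [Fintype n] [Semiring R] [StarRing R]
    [DecidableEq m] [DecidableEq n] {A : Matrix m m R} {D : Matrix n n R}
    (hA : A ∈ unitary (Matrix m m R)) (hD : D ∈ unitary (Matrix n n R)) :
    fromBlocks A 0 0 D ∈ unitary (Matrix (m ⊕ n) (m ⊕ n) R) := by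
  simp only [Unitary.mem_iff, star_eq_conjTranspose] at *
  simp [fromBlocks_conjTranspose, fromBlocks_multiply, ← fromBlocks_one, hA, hD]

end Blocks

theorem Matrix.kronecker_sum {R ι l m n p : Type*} [NonUnitalNonAssocSemiring R] (s : Finset ι)
    (A : Matrix l m R) (B : ι → Matrix n p R) : A ⊗ₖ (∑ i ∈ s, B i) = ∑ i ∈ s, A ⊗ₖ B i := by
  ext ⟨a, b⟩ ⟨c, d⟩
  simp only [kronecker_apply, sum_apply, Finset.mul_sum]

theorem Matrix.vec_transpose_mul_mul_conjTranspose {R l m n p : Type*} [CommSemiring R]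
    [StarRing R] [Fintype m] [Fintype n] (A : Matrix l m R) (X : Matrix m n R)
    (B : Matrix p n R) : vec (A * X * Bᴴ)ᵀ = (A ⊗ₖ B.map (starRingEnd R)) *ᵥ vec Xᵀ := by
  rw [kronecker_mulVec_vec, transpose_mul, transpose_mul, Matrix.mul_assoc]
  rfl

theorem Unitary.ne_zero {R : Type*} [MonoidWithZero R] [StarMul R] [Nontrivial R] {U : R}
    (hU : U ∈ unitary R) : U ≠ 0 :=
  (Unitary.isUnit_coe (U := ⟨U, hU⟩)).ne_zero

theorem Matrix.mul_eq_mul_of_mul_mul_nonsing_inv_eq {K n : Type*} [CommRing K] [Fintype n]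
    [DecidableEq n] {A M N : Matrix n n K} (h : A * M * A⁻¹ = N) (hN : N ≠ 0) :
    A * M = N * A := by
  have hA : IsUnit A.det := by
    by_contra hA
    rw [nonsing_inv_apply_not_isUnit A hA, Matrix.mul_zero] at h
    exact hN h.symm
  rw [← h, nonsing_inv_mul_cancel_right A _ hA]

theorem vec_eq_vec_transpose {n : ℕ} (O : Matrix (BV n) (BV n) ℂ) :
    _root_.vec O = Matrix.vec Oᵀ := rfl

section Lindblad

variable {n : ℕ} {ι : Type} [Fintype ι] {P1 P2 : ι → Matrix (BV n) (BV n) ℂ}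

theorem lindblad_eq_sum_of_mem_unitaryGroup (hP1 : ∀ i, P1 i ∈ unitaryGroup (BV n) ℂ)
    (hP2 : ∀ i, P2 i ∈ unitaryGroup (BV n) ℂ) (lam : ι → ℝ)
    (ρ : Matrix (BV n ⊕ BV n) (BV n ⊕ BV n) ℂ) :
    lindblad P1 P2 lam ρ = ∑ i, (lam i : ℂ) •
      (fromBlocks (P1 i) 0 0 (P2 i) * ρ * (fromBlocks (P1 i) 0 0 (P2 i))ᴴ - ρ) := by
  refine Finset.sum_congr rfl fun i _ => ?_
  rw [← star_eq_conjTranspose,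
    Unitary.star_mul_self_of_mem (fromBlocks_mem_unitary (hP1 i) (hP2 i)), Matrix.mul_one,
    Matrix.one_mul, ← two_smul ℂ ρ, smul_smul]
  norm_num

theorem vec_toBlocks₁₂_lindblad (hP1 : ∀ i, P1 i ∈ unitaryGroup (BV n) ℂ)
    (hP2 : ∀ i, P2 i ∈ unitaryGroup (BV n) ℂ) (lam : ι → ℝ)
    (ρ : Matrix (BV n ⊕ BV n) (BV n ⊕ BV n) ℂ) :
    _root_.vec (lindblad P1 P2 lam ρ).toBlocks₁₂ =
      (∑ i, (lam i : ℂ) • (P1 i ⊗ₖ (P2 i).map (starRingEnd ℂ) - 1)) *ᵥ _root_.vec ρ.toBlocks₁₂ := by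
  rw [lindblad_eq_sum_of_mem_unitaryGroup hP1 hP2, vec_eq_vec_transpose, vec_eq_vec_transpose]
  simp only [toBlocks₁₂_sum, toBlocks₁₂_smul, toBlocks₁₂_sub,
    toBlocks₁₂_fromBlocks_mul_mul_conjTranspose, transpose_sum, transpose_smul, transpose_sub,
    Matrix.vec_sum, Matrix.vec_smul, Matrix.vec_sub, vec_transpose_mul_mul_conjTranspose,
    sum_mulVec, smul_mulVec, sub_mulVec, one_mulVec]

end Lindblad

theorem lindblad_imaginary_time_evolution_general {n : ℕ} {ι : Type} [Fintype ι]
    (P1 P2 P : ι → Matrix (BV n) (BV n) ℂ)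
    (hP1 : ∀ i, P1 i ∈ Matrix.unitaryGroup (BV n) ℂ)
    (hP2 : ∀ i, P2 i ∈ Matrix.unitaryGroup (BV n) ℂ)
    (hPu : ∀ i, P i ∈ Matrix.unitaryGroup (BV n) ℂ)
    (lam : ι → ℝ)
    (hB : ∀ i, Bmat n * (P1 i ⊗ₖ (P2 i).map (starRingEnd ℂ)) * (Bmat n)⁻¹
      = -((1 : Matrix (BV n) (BV n) ℂ) ⊗ₖ P i))
    (ρ : Matrix (BV n ⊕ BV n) (BV n ⊕ BV n) ℂ) :
    (Bmat n).mulVec (_root_.vec (lindblad P1 P2 lam ρ).toBlocks₁₂)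
      = (-((1 : Matrix (BV n) (BV n) ℂ) ⊗ₖ (∑ i, (lam i : ℂ) • P i) +
            (∑ i, (lam i : ℂ)) •
              (1 : Matrix (BV n × BV n) (BV n × BV n) ℂ))).mulVec
          ((Bmat n).mulVec (_root_.vec ρ.toBlocks₁₂)) := by
  have hBP : ∀ i, Bmat n * (P1 i ⊗ₖ (P2 i).map (starRingEnd ℂ))
      = -((1 : Matrix (BV n) (BV n) ℂ) ⊗ₖ P i) * Bmat n := fun i =>
    mul_eq_mul_of_mul_mul_nonsing_inv_eq (hB i)
      (neg_ne_zero.2 (Unitary.ne_zero (kronecker_mem_unitary (one_mem _) (hPu i))))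
  rw [vec_toBlocks₁₂_lindblad hP1 hP2, mulVec_mulVec, mulVec_mulVec]
  congr 1
  calc Bmat n * ∑ i, (lam i : ℂ) • (P1 i ⊗ₖ (P2 i).map (starRingEnd ℂ) - 1)
      = ∑ i, (lam i : ℂ) • (-((1 : Matrix (BV n) (BV n) ℂ) ⊗ₖ P i) * Bmat n - Bmat n) := by
        simp only [Finset.mul_sum, mul_smul_comm, Matrix.mul_sub, hBP, Matrix.mul_one]
    _ = _ := by
        rw [kronecker_sum, Finset.sum_smul, ← Finset.sum_add_distrib, ← Finset.sum_neg_distrib,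
          Finset.sum_mul]
        refine Finset.sum_congr rfl fun i _ => ?_
        rw [kronecker_smul]
        simp only [smul_sub, smul_neg, Matrix.neg_mul, Matrix.add_mul, smul_mul_assoc, Matrix.one_mul]
        abel

/-- Imaginary time evolution in Pauli quantum computing: if
`B (P_{1,i} ⊗ conj(P_{2,i})) B⁻¹ = −I ⊗ Pᵢ` for all `i`, then the Lindbladian with
jump operators `Fᵢ = diag(P_{1,i}, P_{2,i})` acts, in the encoded picture, as
`B vec((⟨0|⊗I) L[ρ] (|1⟩⊗I)) = −(I ⊗ H_p + (∑ i λᵢ) I) · B vec(S)`,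
where `H_p = ∑ i λᵢ Pᵢ` and `S` is the upper-right block of `ρ`. -/
theorem lindblad_imaginary_time_evolution {n : ℕ} {ι : Type} [Fintype ι]
    (P1 P2 P : ι → Matrix (BV n) (BV n) ℂ)
    (hP1 : ∀ i, P1 i ∈ Matrix.unitaryGroup (BV n) ℂ)
    (hP2 : ∀ i, P2 i ∈ Matrix.unitaryGroup (BV n) ℂ)
    (hPu : ∀ i, P i ∈ Matrix.unitaryGroup (BV n) ℂ)
    (hPh : ∀ i, (P i).IsHermitian)
    (lam : ι → ℝ) (hlam : ∀ i, 0 ≤ lam i)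
    (hB : ∀ i, Bmat n * (P1 i ⊗ₖ (P2 i).map (starRingEnd ℂ)) * (Bmat n)⁻¹
      = -((1 : Matrix (BV n) (BV n) ℂ) ⊗ₖ P i))
    (ρ : Matrix (BV n ⊕ BV n) (BV n ⊕ BV n) ℂ) :
    (Bmat n).mulVec (_root_.vec (lindblad P1 P2 lam ρ).toBlocks₁₂)
      = (-((1 : Matrix (BV n) (BV n) ℂ) ⊗ₖ (∑ i, (lam i : ℂ) • P i) +
            (∑ i, (lam i : ℂ)) •
              (1 : Matrix (BV n × BV n) (BV n × BV n) ℂ))).mulVec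
          ((Bmat n).mulVec (_root_.vec ρ.toBlocks₁₂)) :=
  lindblad_imaginary_time_evolution_general P1 P2 P hP1 hP2 hPu lam hB ρ
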